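/- Corollary 1 (relaxed δISS condition inside the invariant set): define σ̄_z = σ(‖[W_z U_z b_z]‖_∞), σ̄_f = σ(‖[W_f U_f b_f]‖_∞), φ̄_r = tanh(‖[W_r U_r b_r]‖_∞), and suppose ‖U_r‖_∞ ( (1/4) ‖U_f‖_∞ + σ̄_f ) < 1 − (1/4) ((1 + φ̄_r)/(1 − σ̄_z)) ‖U_z‖_∞. Then the GRU restricted to initial states in [−1,1]^{n_x} is Incrementally Input-to-State Stable: there exist a class-KL function β_Δ and a class-K∞ function γ_Δu such that for every pair of initial states x̄_a, x̄_b with ‖x̄_a‖_∞ ≤ 1 and ‖x̄_b‖_∞ ≤ 1, every pair of input sequences u_a, u_b with ‖u_a(t)‖_∞ ≤ 1 and ‖u_b(t)‖_∞ ≤ 1 for all t, and every k ≥ 0, ‖x_a(k) − x_b(k)‖_∞ ≤ β_Δ(‖x̄_a − x̄_b‖_∞, k) + γ_Δu(sup_t ‖u_a(t) − u_b(t)‖_∞). -/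

import Mathlib

open Real Filter

/-- The sigmoid activation function. -/
noncomputable def sigmoid (s : ℝ) : ℝ := 1 / (1 + Real.exp (-s))

/-- Induced infinity norm of a matrix (maximum absolute row sum). -/
noncomputable def matNorm {n m : ℕ} (A : Matrix (Fin n) (Fin m) ℝ) : ℝ :=
  ⨆ i, ∑ j, |A i j|

/-- Infinity norm of the horizontal concatenation `[A B c]`
(maximum absolute row sum of the concatenated matrix). -/
noncomputable def catNorm {n m p : ℕ} (A : Matrix (Fin n) (Fin m) ℝ)
    (B : Matrix (Fin n) (Fin p) ℝ) (c : Fin n → ℝ) : ℝ :=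
  ⨆ i, (∑ j, |A i j| + ∑ j, |B i j| + |c i|)

/-- One step of the single-layer GRU:
`x⁺ = z ∘ x + (1 - z) ∘ tanh(W_r u + U_r (f ∘ x) + b_r)`,
`z = σ(W_z u + U_z x + b_z)`, `f = σ(W_f u + U_f x + b_f)`. -/
noncomputable def gruStep {nu nx : ℕ}
    (Wz Wf Wr : Matrix (Fin nx) (Fin nu) ℝ)
    (Uz Uf Ur : Matrix (Fin nx) (Fin nx) ℝ)
    (bz bf br : Fin nx → ℝ)
    (u : Fin nu → ℝ) (x : Fin nx → ℝ) : Fin nx → ℝ :=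
  let z : Fin nx → ℝ := fun i => _root_.sigmoid ((Wz.mulVec u + Uz.mulVec x + bz) i)
  let f : Fin nx → ℝ := fun i => _root_.sigmoid ((Wf.mulVec u + Uf.mulVec x + bf) i)
  let r : Fin nx → ℝ := fun i => Real.tanh ((Wr.mulVec u + Ur.mulVec (f * x) + br) i)
  fun j => z j * x j + (1 - z j) * r j

/-- A function `γ : [0,∞) → [0,∞)` is of class K∞ if it is continuous,
strictly increasing, unbounded and `γ 0 = 0`. -/
def IsKInf (γ : ℝ → ℝ) : Prop :=
  ContinuousOn γ (Set.Ici 0) ∧ StrictMonoOn γ (Set.Ici 0) ∧ γ 0 = 0 ∧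
    ∀ M : ℝ, ∃ s, 0 ≤ s ∧ M < γ s

/-- A function `β : [0,∞) × ℕ → [0,∞)` is of class KL if `β (·, k)` is of class K∞
for each `k`, `β (s, ·)` is nonincreasing, and `β (s, k) → 0` as `k → ∞`. -/
def IsKL (β : ℝ → ℕ → ℝ) : Prop :=
  (∀ k : ℕ, IsKInf fun s => β s k) ∧
    (∀ s : ℝ, 0 ≤ s → ∀ k l : ℕ, k ≤ l → β s l ≤ β s k) ∧
    (∀ s : ℝ, 0 ≤ s → Filter.Tendsto (fun k : ℕ => β s k) Filter.atTop (nhds 0))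

/-!
On the invariant set `[-1,1]^{n_x}` the GRU step is an incremental contraction. Writing
`x⁺_a - x⁺_b = z_a (x_a - x_b) + (z_a - z_b)(x_b - r_b) + (1 - z_a)(r_a - r_b)` componentwise and
using that `σ` is `¼`-Lipschitz, that `tanh s = 2σ(2s) - 1` is `1`-Lipschitz, and that on the unit
ball the gates are bounded by `σ̄_z`, `σ̄_f`, `φ̄_r`, one gets
`‖x⁺_a - x⁺_b‖ ≤ α ‖x_a - x_b‖ + c ‖u_a - u_b‖` with
`α = σ̄_z + (1 - σ̄_z) ‖U_r‖ (¼‖U_f‖ + σ̄_f) + ¼ (1 + φ̄_r) ‖U_z‖`; the hypothesis, multiplied by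
`1 - σ̄_z`, is exactly `α < 1`. Iterating gives
`‖x_a(k) - x_b(k)‖ ≤ α^k ‖x̄_a - x̄_b‖ + c/(1-α) sup_t ‖u_a(t) - u_b(t)‖`.
-/

open Matrix
open scoped NNReal

theorem sigmoid_eq_real_sigmoid : _root_.sigmoid = Real.sigmoid := by
  funext s
  rw [_root_.sigmoid, Real.sigmoid_def, one_div]

theorem sigmoid_mem_Ioo (s : ℝ) : _root_.sigmoid s ∈ Set.Ioo 0 1 := by
  rw [sigmoid_eq_real_sigmoid]
  exact ⟨Real.sigmoid_pos s, Real.sigmoid_lt_one s⟩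

theorem lipschitzWith_sigmoid : LipschitzWith 4⁻¹ _root_.sigmoid := by
  rw [sigmoid_eq_real_sigmoid]
  refine lipschitzWith_of_nnnorm_deriv_le differentiable_sigmoid fun x => ?_
  rw [Real.deriv_sigmoid, ← NNReal.coe_le_coe, coe_nnnorm, Real.norm_eq_abs,
    abs_of_nonneg (mul_nonneg (Real.sigmoid_nonneg x) (sub_nonneg.2 (Real.sigmoid_le_one x)))]
  push_cast
  nlinarith [sq_nonneg (Real.sigmoid x - 2⁻¹)]

theorem abs_sigmoid_le_of_abs_le {a m : ℝ} (h : |a| ≤ m) :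
    |_root_.sigmoid a| ≤ _root_.sigmoid m := by
  rw [sigmoid_eq_real_sigmoid, abs_of_pos (Real.sigmoid_pos a)]
  exact Real.sigmoid_le (le_of_abs_le h)

theorem tanh_eq_two_mul_sigmoid_sub_one (x : ℝ) : tanh x = 2 * _root_.sigmoid (2 * x) - 1 := by
  have h : exp (-(2 * x)) = exp (-x) ^ 2 := by rw [← Real.exp_nat_mul]; ring_nf
  rw [tanh_eq_sinh_div_cosh, sinh_eq, cosh_eq, _root_.sigmoid, h]
  have : exp x * exp (-x) = 1 := by rw [← Real.exp_add]; simp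
  field_simp
  linear_combination (2 * exp (-x)) * this

theorem lipschitzWith_tanh : LipschitzWith 1 tanh := by
  refine LipschitzWith.mk_one fun a b => ?_
  have h := lipschitzWith_sigmoid.dist_le_mul (2 * a) (2 * b)
  simp only [Real.dist_eq, NNReal.coe_inv, NNReal.coe_ofNat] at h ⊢
  calc |tanh a - tanh b| = 2 * |_root_.sigmoid (2 * a) - _root_.sigmoid (2 * b)| := by
        rw [tanh_eq_two_mul_sigmoid_sub_one, tanh_eq_two_mul_sigmoid_sub_one, ← abs_two,
          ← abs_mul]
        ring_nf
    _ ≤ 2 * (4⁻¹ * |2 * a - 2 * b|) := by gcongr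
    _ = |a - b| := by rw [← mul_sub, abs_mul, abs_two]; ring

theorem tanh_monotone : Monotone tanh := fun a b hab => by
  rw [tanh_eq_two_mul_sigmoid_sub_one, tanh_eq_two_mul_sigmoid_sub_one, sigmoid_eq_real_sigmoid]
  linarith [Real.sigmoid_le (by linarith : 2 * a ≤ 2 * b)]

theorem abs_tanh_le_of_abs_le {a m : ℝ} (h : |a| ≤ m) : |tanh a| ≤ tanh m := by
  rw [abs_le] at h
  rw [abs_le', ← tanh_neg]
  exact ⟨tanh_monotone h.2, tanh_monotone (by linarith)⟩

section AffineMaps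

variable {n m p : ℕ}

theorem matNorm_nonneg (A : Matrix (Fin n) (Fin m) ℝ) : 0 ≤ matNorm A :=
  Real.iSup_nonneg fun _ => Finset.sum_nonneg fun _ _ => abs_nonneg _

theorem catNorm_nonneg (A : Matrix (Fin n) (Fin m) ℝ) (B : Matrix (Fin n) (Fin p) ℝ)
    (c : Fin n → ℝ) : 0 ≤ catNorm A B c :=
  Real.iSup_nonneg fun _ => by positivity

theorem tanh_catNorm_nonneg (A : Matrix (Fin n) (Fin m) ℝ) (B : Matrix (Fin n) (Fin p) ℝ)
    (c : Fin n → ℝ) : 0 ≤ tanh (catNorm A B c) := by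
  simpa using tanh_monotone (catNorm_nonneg A B c)

theorem abs_mulVec_apply_le (A : Matrix (Fin n) (Fin m) ℝ) (x : Fin m → ℝ) (i : Fin n) :
    |(A *ᵥ x) i| ≤ (∑ j, |A i j|) * ‖x‖ := by
  rw [Finset.sum_mul]
  refine (Finset.abs_sum_le_sum_abs (fun j => A i j * x j) Finset.univ).trans
    (Finset.sum_le_sum fun j _ => ?_)
  rw [abs_mul]
  exact mul_le_mul_of_nonneg_left (norm_le_pi_norm x j) (abs_nonneg _)

theorem norm_mulVec_le_matNorm (A : Matrix (Fin n) (Fin m) ℝ) (x : Fin m → ℝ) :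
    ‖A *ᵥ x‖ ≤ matNorm A * ‖x‖ :=
  (pi_norm_le_iff_of_nonneg (by have := matNorm_nonneg A; positivity)).2 fun i =>
    (abs_mulVec_apply_le A x i).trans <| mul_le_mul_of_nonneg_right
      (le_ciSup (f := fun i => ∑ j, |A i j|) (Set.finite_range _).bddAbove i) (norm_nonneg x)

theorem abs_affine_apply_le_catNorm (A : Matrix (Fin n) (Fin m) ℝ)
    (B : Matrix (Fin n) (Fin p) ℝ) (c : Fin n → ℝ) {u : Fin m → ℝ} {x : Fin p → ℝ}
    (hu : ‖u‖ ≤ 1) (hx : ‖x‖ ≤ 1) (i : Fin n) :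
    |(A *ᵥ u + B *ᵥ x + c) i| ≤ catNorm A B c := by
  have hA := (abs_mulVec_apply_le A u i).trans
    (mul_le_of_le_one_right (Finset.sum_nonneg fun _ _ => abs_nonneg _) hu)
  have hB := (abs_mulVec_apply_le B x i).trans
    (mul_le_of_le_one_right (Finset.sum_nonneg fun _ _ => abs_nonneg _) hx)
  calc |(A *ᵥ u + B *ᵥ x + c) i| ≤ |(A *ᵥ u) i| + |(B *ᵥ x) i| + |c i| :=
        abs_add_three _ _ _
    _ ≤ ∑ j, |A i j| + ∑ j, |B i j| + |c i| := by gcongr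
    _ ≤ catNorm A B c :=
      le_ciSup (f := fun i => ∑ j, |A i j| + ∑ j, |B i j| + |c i|) (Set.finite_range _).bddAbove i

def gate (g : ℝ → ℝ) (A : Matrix (Fin n) (Fin m) ℝ) (B : Matrix (Fin n) (Fin p) ℝ)
    (c : Fin n → ℝ) (u : Fin m → ℝ) (x : Fin p → ℝ) : Fin n → ℝ :=
  fun i => g ((A *ᵥ u + B *ᵥ x + c) i)

variable {g : ℝ → ℝ} (A : Matrix (Fin n) (Fin m) ℝ) (B : Matrix (Fin n) (Fin p) ℝ)
  (c : Fin n → ℝ)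

theorem norm_gate_le (hg : ∀ {a s}, |a| ≤ s → |g a| ≤ g s) {u : Fin m → ℝ} {x : Fin p → ℝ}
    (hu : ‖u‖ ≤ 1) (hx : ‖x‖ ≤ 1) : ‖gate g A B c u x‖ ≤ g (catNorm A B c) := by
  have h0 : 0 ≤ g (catNorm A B c) :=
    (abs_nonneg _).trans (hg (a := 0) (by simpa using catNorm_nonneg A B c))
  exact (pi_norm_le_iff_of_nonneg h0).2 fun i => hg (abs_affine_apply_le_catNorm A B c hu hx i)

theorem norm_gate_sub_gate_le {K : ℝ≥0} (hg : LipschitzWith K g) (u v : Fin m → ℝ)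
    (x y : Fin p → ℝ) :
    ‖gate g A B c u x - gate g A B c v y‖ ≤ K * (matNorm A * ‖u - v‖ + matNorm B * ‖x - y‖) := by
  have hdiff : (A *ᵥ u + B *ᵥ x + c) - (A *ᵥ v + B *ᵥ y + c) = A *ᵥ (u - v) + B *ᵥ (x - y) := by
    rw [Matrix.mulVec_sub, Matrix.mulVec_sub]; abel
  have hnorm : ‖A *ᵥ (u - v) + B *ᵥ (x - y)‖ ≤ matNorm A * ‖u - v‖ + matNorm B * ‖x - y‖ :=
    (norm_add_le _ _).trans (add_le_add (norm_mulVec_le_matNorm A _) (norm_mulVec_le_matNorm B _))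
  have h0 := (norm_nonneg _).trans hnorm
  refine (pi_norm_le_iff_of_nonneg (by positivity)).2 fun i => ?_
  calc ‖(gate g A B c u x - gate g A B c v y) i‖
      ≤ K * ‖((A *ᵥ u + B *ᵥ x + c) - (A *ᵥ v + B *ᵥ y + c)) i‖ := hg.norm_sub_le _ _
    _ ≤ K * (matNorm A * ‖u - v‖ + matNorm B * ‖x - y‖) := by
      rw [hdiff]; gcongr; exact (norm_le_pi_norm _ i).trans hnorm

end AffineMaps

theorem abs_interpolate_sub_le {z z' x x' r r' σ a d dx du δ M : ℝ} (hz : 0 ≤ z)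
    (hzσ : z ≤ σ) (hz1 : z ≤ 1) (ha : a ≤ 1) (hd : 0 ≤ d) (hdu : 0 ≤ du)
    (hx : |x - x'| ≤ dx) (hr : |r - r'| ≤ a * dx + d * du) (hzz : |z - z'| ≤ δ)
    (hxr : |x' - r'| ≤ M) :
    |z * x + (1 - z) * r - (z' * x' + (1 - z') * r')| ≤
      (σ + (1 - σ) * a) * dx + d * du + δ * M := by
  have hdx : 0 ≤ dx := (abs_nonneg _).trans hx
  have hδ : 0 ≤ δ := (abs_nonneg _).trans hzz
  calc |z * x + (1 - z) * r - (z' * x' + (1 - z') * r')|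
      = |z * (x - x') + (z - z') * (x' - r') + (1 - z) * (r - r')| := by congr 1; ring
    _ ≤ |z * (x - x')| + |(z - z') * (x' - r')| + |(1 - z) * (r - r')| := abs_add_three _ _ _
    _ ≤ z * dx + δ * M + (1 - z) * (a * dx + d * du) := by
      rw [abs_mul, abs_mul, abs_mul, abs_of_nonneg hz, abs_of_nonneg (sub_nonneg.2 hz1)]
      gcongr
    _ ≤ (σ + (1 - σ) * a) * dx + d * du + δ * M := by
      -- `z + (1 - z) a` is nondecreasing in `z` since `a ≤ 1`
      nlinarith [mul_nonneg (mul_nonneg (sub_nonneg.2 hzσ) (sub_nonneg.2 ha)) hdx,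
        mul_nonneg (mul_nonneg hz hd) hdu]

theorem isKInf_const_mul {C : ℝ} (hC : 0 < C) : IsKInf fun s => C * s := by
  refine ⟨(continuous_const_mul C).continuousOn, fun a _ b _ hab => mul_lt_mul_of_pos_left hab hC,
    mul_zero C, fun M => ⟨(|M| + 1) / C, by positivity, ?_⟩⟩
  show M < C * ((|M| + 1) / C)
  rw [mul_div_cancel₀ _ hC.ne']
  linarith [le_abs_self M]

theorem isKL_pow_mul {α : ℝ} (hα0 : 0 < α) (hα1 : α < 1) : IsKL fun s k => α ^ k * s :=
  ⟨fun k => isKInf_const_mul (pow_pos hα0 k),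
    fun _ hs _ _ hkl => mul_le_mul_of_nonneg_right (pow_le_pow_of_le_one hα0.le hα1.le hkl) hs,
    fun s _ => by simpa using (tendsto_pow_atTop_nhds_zero_of_lt_one hα0.le hα1).mul_const s⟩

theorem le_pow_mul_add_of_le_mul_add {d e : ℕ → ℝ} {α c E : ℝ} (hα0 : 0 ≤ α) (hα1 : α < 1)
    (hc : 0 ≤ c) (hE : 0 ≤ E) (he : ∀ k, e k ≤ E) (hd : ∀ k, d (k + 1) ≤ α * d k + c * e k) :
    ∀ k, d k ≤ α ^ k * d 0 + c / (1 - α) * E := by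
  have hgeom : α * (c / (1 - α) * E) + c * E = c / (1 - α) * E := by
    field_simp [(sub_pos.2 hα1).ne']
    ring
  intro k
  induction k with
  | zero => simpa using mul_nonneg (div_nonneg hc (sub_pos.2 hα1).le) hE
  | succ k ih =>
    calc d (k + 1) ≤ α * d k + c * e k := hd k
      _ ≤ α * (α ^ k * d 0 + c / (1 - α) * E) + c * E := by gcongr; exact he k
      _ = α ^ (k + 1) * d 0 + c / (1 - α) * E := by linear_combination hgeom

theorem exists_deltaISS_of_contraction {X V : Type*} [SeminormedAddCommGroup X]
    [SeminormedAddCommGroup V] (step : V → X → X) {S : Set X} {T : Set V} {α c : ℝ}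
    (hα0 : 0 < α) (hα1 : α < 1) (hc : 0 ≤ c) (hT : Bornology.IsBounded T)
    (hS : ∀ u ∈ T, ∀ x ∈ S, step u x ∈ S)
    (hcontr : ∀ u ∈ T, ∀ v ∈ T, ∀ x ∈ S, ∀ y ∈ S,
      ‖step u x - step v y‖ ≤ α * ‖x - y‖ + c * ‖u - v‖) :
    ∃ β : ℝ → ℕ → ℝ, ∃ γ : ℝ → ℝ, IsKL β ∧ IsKInf γ ∧
      ∀ ua ub : ℕ → V, (∀ t, ua t ∈ T) → (∀ t, ub t ∈ T) →
        ∀ xa xb : ℕ → X, xa 0 ∈ S → xb 0 ∈ S →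
          (∀ k, xa (k + 1) = step (ua k) (xa k)) → (∀ k, xb (k + 1) = step (ub k) (xb k)) →
            ∀ k, ‖xa k - xb k‖ ≤ β ‖xa 0 - xb 0‖ k + γ (⨆ t, ‖ua t - ub t‖) := by
  have hC : 0 < c / (1 - α) + 1 := by
    have := div_nonneg hc (sub_pos.2 hα1).le
    positivity
  refine ⟨fun s k => α ^ k * s, fun s => (c / (1 - α) + 1) * s, isKL_pow_mul hα0 hα1,
    isKInf_const_mul hC, ?_⟩
  intro ua ub hua hub xa xb hxa0 hxb0 hxa hxb
  have hinv : ∀ {u : ℕ → V} {x : ℕ → X}, (∀ t, u t ∈ T) → x 0 ∈ S →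
      (∀ k, x (k + 1) = step (u k) (x k)) → ∀ k, x k ∈ S := by
    intro u x hu h0 hx k
    induction k with
    | zero => exact h0
    | succ k ih => exact hx k ▸ hS _ (hu k) _ ih
  obtain ⟨R, hR⟩ := hT.exists_norm_le
  have hbdd : BddAbove (Set.range fun t => ‖ua t - ub t‖) :=
    ⟨R + R, by
      rintro _ ⟨t, rfl⟩
      exact (norm_sub_le _ _).trans (add_le_add (hR _ (hua t)) (hR _ (hub t)))⟩
  have hE : 0 ≤ ⨆ t, ‖ua t - ub t‖ := Real.iSup_nonneg fun _ => norm_nonneg _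
  intro k
  calc ‖xa k - xb k‖ ≤ α ^ k * ‖xa 0 - xb 0‖ + c / (1 - α) * ⨆ t, ‖ua t - ub t‖ :=
        le_pow_mul_add_of_le_mul_add (d := fun k => ‖xa k - xb k‖) hα0.le hα1 hc hE
          (fun t => le_ciSup hbdd t) (fun k => by
            rw [hxa k, hxb k]
            exact hcontr _ (hua k) _ (hub k) _ (hinv hua hxa0 hxa k) _ (hinv hub hxb0 hxb k)) k
    _ ≤ α ^ k * ‖xa 0 - xb 0‖ + (c / (1 - α) + 1) * ⨆ t, ‖ua t - ub t‖ := by gcongr; linarith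

section GRU

variable {nu nx : ℕ} (Wz Wf Wr : Matrix (Fin nx) (Fin nu) ℝ)
  (Uz Uf Ur : Matrix (Fin nx) (Fin nx) ℝ) (bz bf br : Fin nx → ℝ)

theorem gruStep_apply (u : Fin nu → ℝ) (x : Fin nx → ℝ) (j : Fin nx) :
    gruStep Wz Wf Wr Uz Uf Ur bz bf br u x j =
      gate _root_.sigmoid Wz Uz bz u x j * x j + (1 - gate _root_.sigmoid Wz Uz bz u x j) *
        gate tanh Wr Ur br u (gate _root_.sigmoid Wf Uf bf u x * x) j :=
  rfl

noncomputable def gruRate : ℝ :=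
  _root_.sigmoid (catNorm Wz Uz bz) + (1 - _root_.sigmoid (catNorm Wz Uz bz)) *
    (matNorm Ur * ((1 / 4) * matNorm Uf + _root_.sigmoid (catNorm Wf Uf bf))) +
      (1 + tanh (catNorm Wr Ur br)) * matNorm Uz / 4

noncomputable def gruGain : ℝ :=
  matNorm Wr + matNorm Ur * matNorm Wf / 4 + (1 + tanh (catNorm Wr Ur br)) * matNorm Wz / 4

theorem gruRate_pos : 0 < gruRate Wz Wf Wr Uz Uf Ur bz bf br := by
  obtain ⟨hσz, hσz1⟩ := sigmoid_mem_Ioo (catNorm Wz Uz bz)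
  have := (sigmoid_mem_Ioo (catNorm Wf Uf bf)).1
  have := tanh_catNorm_nonneg Wr Ur br
  have := matNorm_nonneg Ur
  have := matNorm_nonneg Uf
  have := matNorm_nonneg Uz
  have := sub_pos.2 hσz1
  unfold gruRate
  positivity

theorem gruGain_nonneg : 0 ≤ gruGain Wz Wf Wr Ur br := by
  have := tanh_catNorm_nonneg Wr Ur br
  have := matNorm_nonneg Wr
  have := matNorm_nonneg Ur
  have := matNorm_nonneg Wf
  have := matNorm_nonneg Wz
  unfold gruGain
  positivity

theorem gruRate_lt_one
    (hcond : matNorm Ur * ((1 / 4) * matNorm Uf + _root_.sigmoid (catNorm Wf Uf bf)) <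
      1 - (1 / 4) * ((1 + tanh (catNorm Wr Ur br)) /
        (1 - _root_.sigmoid (catNorm Wz Uz bz))) * matNorm Uz) :
    gruRate Wz Wf Wr Uz Uf Ur bz bf br < 1 := by
  have hσ : 0 < 1 - _root_.sigmoid (catNorm Wz Uz bz) := sub_pos.2 (sigmoid_mem_Ioo _).2
  have h := mul_lt_mul_of_pos_left hcond hσ
  have e : (1 - _root_.sigmoid (catNorm Wz Uz bz)) * (1 / 4 * ((1 + tanh (catNorm Wr Ur br)) /
      (1 - _root_.sigmoid (catNorm Wz Uz bz))) * matNorm Uz) =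
      (1 + tanh (catNorm Wr Ur br)) * matNorm Uz / 4 := by
    field_simp
  rw [mul_sub, mul_one, e] at h
  unfold gruRate
  linarith

theorem norm_gruStep_le_one (u : Fin nu → ℝ) {x : Fin nx → ℝ} (hx : ‖x‖ ≤ 1) :
    ‖gruStep Wz Wf Wr Uz Uf Ur bz bf br u x‖ ≤ 1 := by
  refine (pi_norm_le_iff_of_nonneg zero_le_one).2 fun j => ?_
  rw [Real.norm_eq_abs, gruStep_apply]
  set z := gate _root_.sigmoid Wz Uz bz u x j
  set r := gate tanh Wr Ur br u (gate _root_.sigmoid Wf Uf bf u x * x) j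
  obtain ⟨hz0, hz1⟩ : z ∈ Set.Ioo 0 1 := sigmoid_mem_Ioo _
  have hx : |x j| ≤ 1 := (norm_le_pi_norm x j).trans hx
  have hr : |r| ≤ 1 := (Real.abs_tanh_lt_one _).le
  calc |z * x j + (1 - z) * r| ≤ |z * x j| + |(1 - z) * r| := abs_add_le _ _
    _ ≤ z * 1 + (1 - z) * 1 := by
      rw [abs_mul, abs_mul, abs_of_pos hz0, abs_of_pos (sub_pos.2 hz1)]
      gcongr
    _ = 1 := by ring

theorem norm_gruCandidate_sub_le {u v : Fin nu → ℝ} {x y : Fin nx → ℝ} (hu : ‖u‖ ≤ 1)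
    (hx : ‖x‖ ≤ 1) (hy : ‖y‖ ≤ 1) :
    ‖gate tanh Wr Ur br u (gate _root_.sigmoid Wf Uf bf u x * x) -
        gate tanh Wr Ur br v (gate _root_.sigmoid Wf Uf bf v y * y)‖ ≤
      matNorm Ur * ((1 / 4) * matNorm Uf + _root_.sigmoid (catNorm Wf Uf bf)) * ‖x - y‖ +
        (matNorm Wr + matNorm Ur * matNorm Wf / 4) * ‖u - v‖ := by
  set σf := _root_.sigmoid (catNorm Wf Uf bf)
  set fu := gate _root_.sigmoid Wf Uf bf u x
  set fv := gate _root_.sigmoid Wf Uf bf v y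
  have hfu : ‖fu‖ ≤ σf := norm_gate_le Wf Uf bf abs_sigmoid_le_of_abs_le hu hx
  have hdf : ‖fu - fv‖ ≤ (matNorm Wf * ‖u - v‖ + matNorm Uf * ‖x - y‖) / 4 := by
    simpa [div_eq_inv_mul] using norm_gate_sub_gate_le Wf Uf bf lipschitzWith_sigmoid u v x y
  have hfx : ‖fu * x - fv * y‖ ≤
      σf * ‖x - y‖ + (matNorm Wf * ‖u - v‖ + matNorm Uf * ‖x - y‖) / 4 :=
    calc ‖fu * x - fv * y‖ = ‖fu * (x - y) + (fu - fv) * y‖ := by congr 1; ring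
      _ ≤ ‖fu‖ * ‖x - y‖ + ‖fu - fv‖ * ‖y‖ :=
        (norm_add_le _ _).trans (add_le_add (norm_mul_le _ _) (norm_mul_le _ _))
      _ ≤ σf * ‖x - y‖ + (matNorm Wf * ‖u - v‖ + matNorm Uf * ‖x - y‖) / 4 :=
        add_le_add (mul_le_mul_of_nonneg_right hfu (norm_nonneg _))
          ((mul_le_of_le_one_right (norm_nonneg _) hy).trans hdf)
  have := matNorm_nonneg Ur
  calc _ ≤ matNorm Wr * ‖u - v‖ + matNorm Ur * ‖fu * x - fv * y‖ := by
        simpa using norm_gate_sub_gate_le Wr Ur br lipschitzWith_tanh u v (fu * x) (fv * y)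
    _ ≤ matNorm Wr * ‖u - v‖ + matNorm Ur *
        (σf * ‖x - y‖ + (matNorm Wf * ‖u - v‖ + matNorm Uf * ‖x - y‖) / 4) := by
      gcongr
    _ = _ := by ring

theorem norm_gruStep_sub_le
    (hreset : matNorm Ur * ((1 / 4) * matNorm Uf + _root_.sigmoid (catNorm Wf Uf bf)) ≤ 1)
    {u v : Fin nu → ℝ} {x y : Fin nx → ℝ} (hu : ‖u‖ ≤ 1) (hv : ‖v‖ ≤ 1) (hx : ‖x‖ ≤ 1)
    (hy : ‖y‖ ≤ 1) :
    ‖gruStep Wz Wf Wr Uz Uf Ur bz bf br u x - gruStep Wz Wf Wr Uz Uf Ur bz bf br v y‖ ≤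
      gruRate Wz Wf Wr Uz Uf Ur bz bf br * ‖x - y‖ + gruGain Wz Wf Wr Ur br * ‖u - v‖ := by
  set zu := gate _root_.sigmoid Wz Uz bz u x
  set zv := gate _root_.sigmoid Wz Uz bz v y
  set rv := gate tanh Wr Ur br v (gate _root_.sigmoid Wf Uf bf v y * y)
  have hzu : ‖zu‖ ≤ _root_.sigmoid (catNorm Wz Uz bz) :=
    norm_gate_le Wz Uz bz abs_sigmoid_le_of_abs_le hu hx
  have hdz : ‖zu - zv‖ ≤ (matNorm Wz * ‖u - v‖ + matNorm Uz * ‖x - y‖) / 4 := by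
    simpa [div_eq_inv_mul] using norm_gate_sub_gate_le Wz Uz bz lipschitzWith_sigmoid u v x y
  have hfy : ‖gate _root_.sigmoid Wf Uf bf v y * y‖ ≤ 1 :=
    (norm_mul_le _ _).trans <| mul_le_one₀ ((norm_gate_le Wf Uf bf abs_sigmoid_le_of_abs_le hv
      hy).trans (sigmoid_mem_Ioo _).2.le) (norm_nonneg _) hy
  have hrv : ‖rv‖ ≤ tanh (catNorm Wr Ur br) := norm_gate_le Wr Ur br abs_tanh_le_of_abs_le hv hfy
  have hd : 0 ≤ matNorm Wr + matNorm Ur * matNorm Wf / 4 := by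
    have := matNorm_nonneg Wr; have := matNorm_nonneg Ur; have := matNorm_nonneg Wf
    positivity
  have hrate := gruRate_pos Wz Wf Wr Uz Uf Ur bz bf br
  have hgain := gruGain_nonneg Wz Wf Wr Ur br
  refine (pi_norm_le_iff_of_nonneg (by positivity)).2 fun j => ?_
  obtain ⟨hz0, hz1⟩ : zu j ∈ Set.Ioo 0 1 := sigmoid_mem_Ioo _
  have hyr : |y j - rv j| ≤ 1 + tanh (catNorm Wr Ur br) := (abs_sub _ _).trans
    (add_le_add ((norm_le_pi_norm y j).trans hy) ((norm_le_pi_norm rv j).trans hrv))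
  rw [Pi.sub_apply, Real.norm_eq_abs, gruStep_apply, gruStep_apply]
  refine (abs_interpolate_sub_le hz0.le (le_of_abs_le ((norm_le_pi_norm zu j).trans hzu)) hz1.le
    hreset hd (norm_nonneg _) (norm_le_pi_norm (x - y) j)
    ((norm_le_pi_norm _ j).trans (norm_gruCandidate_sub_le Wf Wr Uf Ur bf br hu hx hy))
    ((norm_le_pi_norm (zu - zv) j).trans hdz) hyr).trans_eq ?_
  unfold gruRate gruGain
  ring

end GRU

/-- **Corollary 1 (relaxed δISS condition inside the invariant set).**
With `σ̄_z = σ(‖[W_z U_z b_z]‖_∞)`, `σ̄_f = σ(‖[W_f U_f b_f]‖_∞)`,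
`φ̄_r = tanh(‖[W_r U_r b_r]‖_∞)`, if
`‖U_r‖_∞ ((1/4) ‖U_f‖_∞ + σ̄_f) < 1 - (1/4) ((1 + φ̄_r)/(1 - σ̄_z)) ‖U_z‖_∞`
then the GRU restricted to initial states in `[-1,1]^{n_x}` is Incrementally
Input-to-State Stable. -/
theorem gru_deltaISS_relaxed {nu nx : ℕ}
    (Wz Wf Wr : Matrix (Fin nx) (Fin nu) ℝ)
    (Uz Uf Ur : Matrix (Fin nx) (Fin nx) ℝ)
    (bz bf br : Fin nx → ℝ)
    (hcond : matNorm Ur * ((1 / 4) * matNorm Uf + _root_.sigmoid (catNorm Wf Uf bf)) <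
      1 - (1 / 4) * ((1 + Real.tanh (catNorm Wr Ur br)) /
        (1 - _root_.sigmoid (catNorm Wz Uz bz))) * matNorm Uz) :
    ∃ β : ℝ → ℕ → ℝ, ∃ γu : ℝ → ℝ, IsKL β ∧ IsKInf γu ∧
      ∀ xbara xbarb : Fin nx → ℝ, ‖xbara‖ ≤ 1 → ‖xbarb‖ ≤ 1 →
        ∀ ua ub : ℕ → Fin nu → ℝ, (∀ t, ‖ua t‖ ≤ 1) → (∀ t, ‖ub t‖ ≤ 1) →
          ∀ xa xb : ℕ → Fin nx → ℝ, xa 0 = xbara → xb 0 = xbarb →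
            (∀ k, xa (k + 1) = gruStep Wz Wf Wr Uz Uf Ur bz bf br (ua k) (xa k)) →
            (∀ k, xb (k + 1) = gruStep Wz Wf Wr Uz Uf Ur bz bf br (ub k) (xb k)) →
              ∀ k : ℕ, ‖xa k - xb k‖ ≤ β ‖xbara - xbarb‖ k + γu (⨆ t, ‖ua t - ub t‖) := by
  have hreset : matNorm Ur * ((1 / 4) * matNorm Uf + _root_.sigmoid (catNorm Wf Uf bf)) ≤ 1 := by
    have := tanh_catNorm_nonneg Wr Ur br
    have := sub_pos.2 (sigmoid_mem_Ioo (catNorm Wz Uz bz)).2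
    have := matNorm_nonneg Uz
    exact hcond.le.trans (sub_le_self _ (by positivity))
  obtain ⟨β, γu, hβ, hγu, hiss⟩ := exists_deltaISS_of_contraction
    (gruStep Wz Wf Wr Uz Uf Ur bz bf br) (S := Metric.closedBall 0 1) (T := Metric.closedBall 0 1)
    (gruRate_pos Wz Wf Wr Uz Uf Ur bz bf br) (gruRate_lt_one Wz Wf Wr Uz Uf Ur bz bf br hcond)
    (gruGain_nonneg Wz Wf Wr Ur br) Metric.isBounded_closedBall
    (fun u _ x hx => mem_closedBall_zero_iff.2 <|
      norm_gruStep_le_one Wz Wf Wr Uz Uf Ur bz bf br u (mem_closedBall_zero_iff.1 hx))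
    (fun _ hu _ hv _ hx _ hy => norm_gruStep_sub_le Wz Wf Wr Uz Uf Ur bz bf br hreset
      (mem_closedBall_zero_iff.1 hu) (mem_closedBall_zero_iff.1 hv)
      (mem_closedBall_zero_iff.1 hx) (mem_closedBall_zero_iff.1 hy))
  refine ⟨β, γu, hβ, hγu, ?_⟩
  rintro _ _ hxa hxb ua ub hua hub xa xb rfl rfl
  exact hiss ua ub (fun t => mem_closedBall_zero_iff.2 (hua t))
    (fun t => mem_closedBall_zero_iff.2 (hub t)) xa xb (mem_closedBall_zero_iff.2 hxa)
    (mem_closedBall_zero_iff.2 hxb)
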